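/- Claim (the paper's Claim 3.4). Let r be an order with levels on X, let (τ₀, ω₀) be a persistence pair of r, and let ε > 0. Then for every q ∈ R_ε, SV_ε(r, τ₀, ω₀) ⊆ OV(q, ω₀). -/
import Mathlib


open scoped Classical

namespace StableVol

/-- A finite abstract simplicial complex of dimension `n`: a finite family of nonempty
finite subsets of the vertex set, closed under nonempty subsets, in which every element
is contained in an element of cardinality `n+1`. -/
structure NComplex (V : Type*) [DecidableEq V] (n : ℕ) where
  X : Finset (Finset V)
  nonempty_mem : ∀ σ ∈ X, σ.Nonempty
  down_closed : ∀ σ ∈ X, ∀ σ' : Finset V, σ' ⊆ σ → σ'.Nonempty → σ' ∈ X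
  contained_top : ∀ σ ∈ X, ∃ ω ∈ X, σ ⊆ ω ∧ ω.card = n + 1

variable {V : Type*} [DecidableEq V] {n : ℕ}

/-- An `n`-cell is either an `n`-simplex (`some ω`) or the formal cell `ω∞` (`none`). -/
abbrev Cell (V : Type*) := Option (Finset V)

/-- `τ` is a face of the cell `c`.  For `c = some ω` this means that `ω` is an
`n`-simplex of `X` containing `τ`; the faces of `ω∞ = none` are the `(n-1)`-simplices
having exactly one `n`-simplex coface. -/
def faceCell (C : NComplex V n) (τ : Finset V) : Cell V → Prop
  | some ω => ω ∈ C.X ∧ ω.card = n + 1 ∧ τ ⊆ ω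
  | none => {ω | ω ∈ C.X ∧ ω.card = n + 1 ∧ τ ⊆ ω}.ncard = 1

def IsCell (C : NComplex V n) : Cell V → Prop
  | some ω => ω ∈ C.X ∧ ω.card = n + 1
  | none => True

/-- Adjacency in the dual graph, restricted to the edge set `E ⊆ X^(n-1)`. -/
def adj (C : NComplex V n) (E : Set (Finset V)) (c c' : Cell V) : Prop :=
  ∃ τ ∈ E, faceCell C τ c ∧ faceCell C τ c' ∧ c ≠ c'

/-- `KV C E c₀`: the set of `n`-cells in the connected component of `c₀` in the
subgraph of the dual graph with edge set `E`. -/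
def KV (C : NComplex V n) (E : Set (Finset V)) (c₀ : Cell V) : Set (Cell V) :=
  {c | Relation.ReflTransGen (adj C E) c₀ c}

/-- Every `(n-1)`-simplex of `X` is a face of exactly two `n`-cells. -/
def TwoCofaces (C : NComplex V n) : Prop :=
  ∀ τ ∈ C.X, τ.card = n →
    ∃ c₁ c₂ : Cell V, c₁ ≠ c₂ ∧ ∀ c : Cell V, faceCell C τ c ↔ (c = c₁ ∨ c = c₂)

/-- The dual graph (with full edge set `X^(n-1)`) is connected. -/
def DualConn (C : NComplex V n) : Prop :=
  ∀ c c' : Cell V, IsCell C c → IsCell C c' →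
    c' ∈ KV C {τ | τ ∈ C.X ∧ τ.card = n} c

/-- A level function: monotone with respect to strict inclusion of simplices. -/
def IsLevelFun (C : NComplex V n) (lev : Finset V → ℝ) : Prop :=
  ∀ σ ∈ C.X, ∀ σ' ∈ C.X, σ ⊂ σ' → lev σ ≤ lev σ'

/-- `(lev, slt)` is an order with levels on `X`: `lev` is a level function and `slt`
is (the strict form of) a linear order on `X` refining both `lev` and strict
inclusion. -/
def IsOWL (C : NComplex V n) (lev : Finset V → ℝ)
    (slt : Finset V → Finset V → Prop) : Prop :=
  IsLevelFun C lev ∧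
  (∀ σ ∈ C.X, ¬ slt σ σ) ∧
  (∀ σ ∈ C.X, ∀ σ' ∈ C.X, ∀ σ'' ∈ C.X, slt σ σ' → slt σ' σ'' → slt σ σ'') ∧
  (∀ σ ∈ C.X, ∀ σ' ∈ C.X, σ ≠ σ' → slt σ σ' ∨ slt σ' σ) ∧
  (∀ σ ∈ C.X, ∀ σ' ∈ C.X, slt σ σ' → lev σ ≤ lev σ') ∧
  (∀ σ ∈ C.X, ∀ σ' ∈ C.X, σ ⊂ σ' → slt σ σ')

/-- Extension of a strict order on simplices to `n`-cells, `ω∞ = none` being the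
unique maximum. -/
def cslt (slt : Finset V → Finset V → Prop) : Cell V → Cell V → Prop
  | some σ, some σ' => slt σ σ'
  | some _, none => True
  | none, _ => False

/-- `m` is the maximum cell of the set `S` with respect to the order `slt`. -/
def IsMaxCell (slt : Finset V → Finset V → Prop) (S : Set (Cell V)) (m : Cell V) :
    Prop :=
  m ∈ S ∧ ∀ c ∈ S, c ≠ m → cslt slt c m

/-- Edge set of `G(≻ σ₀)`: the `(n-1)`-simplices strictly above `σ₀`. -/
def Egt (C : NComplex V n) (slt : Finset V → Finset V → Prop) (σ₀ : Finset V) :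
    Set (Finset V) :=
  {τ | τ ∈ C.X ∧ τ.card = n ∧ slt σ₀ τ}

/-- Edge set of `G(⪰ σ₀)`. -/
def Ege (C : NComplex V n) (slt : Finset V → Finset V → Prop) (σ₀ : Finset V) :
    Set (Finset V) :=
  {τ | τ ∈ C.X ∧ τ.card = n ∧ (τ = σ₀ ∨ slt σ₀ τ)}

/-- Edge set of `G(lev ≥ s)`. -/
def Elev (C : NComplex V n) (lev : Finset V → ℝ) (s : ℝ) : Set (Finset V) :=
  {τ | τ ∈ C.X ∧ τ.card = n ∧ s ≤ lev τ}

/-- `(τ₀, ω₀)` is a persistence pair of the order `slt`: the two `n`-cells having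
`τ₀` as a face lie in distinct connected components of `G(≻ τ₀)`, and `ω₀` is the
smaller of the two maximum cells of these two components. -/
def IsPersPair (C : NComplex V n) (slt : Finset V → Finset V → Prop)
    (τ₀ ω₀ : Finset V) : Prop :=
  τ₀ ∈ C.X ∧ τ₀.card = n ∧ ω₀ ∈ C.X ∧ ω₀.card = n + 1 ∧
  ∃ c₁ c₂ : Cell V, c₁ ≠ c₂ ∧ faceCell C τ₀ c₁ ∧ faceCell C τ₀ c₂ ∧
    c₂ ∉ KV C (Egt C slt τ₀) c₁ ∧
    ∃ m₂ : Cell V,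
      IsMaxCell slt (KV C (Egt C slt τ₀) c₁) (some ω₀) ∧
      IsMaxCell slt (KV C (Egt C slt τ₀) c₂) m₂ ∧
      cslt slt (some ω₀) m₂

/-- The optimal volume `OV(q, ω₀) = K_V(G(≻_q τ_{q,ω₀}), ω₀)`. -/
def OV (C : NComplex V n) (slt : Finset V → Finset V → Prop) (ω₀ : Finset V) :
    Set (Cell V) :=
  {c | ∃ τ, IsPersPair C slt τ ω₀ ∧ c ∈ KV C (Egt C slt τ) (some ω₀)}

/-- The stable volume `SV_ε(r, τ₀, ω₀) = K_V(G(r̂ ≥ r̂(τ₀) + ε), ω₀)`. -/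
def SV (C : NComplex V n) (lev : Finset V → ℝ) (τ₀ ω₀ : Finset V) (ε : ℝ) :
    Set (Cell V) :=
  KV C (Elev C lev (lev τ₀ + ε)) (some ω₀)

/-- `(qlev, qslt) ∈ R_ε`: an order with levels uniformly `ε/2`-close to `rlev`
satisfying the `(r, ω₀)`-order condition. -/
def InR (C : NComplex V n) (rlev : Finset V → ℝ)
    (rslt : Finset V → Finset V → Prop) (ω₀ : Finset V) (ε : ℝ)
    (qlev : Finset V → ℝ) (qslt : Finset V → Finset V → Prop) : Prop :=
  IsOWL C qlev qslt ∧ (∀ σ ∈ C.X, |qlev σ - rlev σ| < ε / 2) ∧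
  (∀ σ ∈ C.X, rslt σ ω₀ → qslt σ ω₀)

/-- `F_{ε,n}`: the `n`-simplices with level at least `lev τ₀ + ε` that precede `ω₀`. -/
def Fcells (C : NComplex V n) (lev : Finset V → ℝ)
    (slt : Finset V → Finset V → Prop) (τ₀ ω₀ : Finset V) (ε : ℝ) :
    Set (Finset V) :=
  {σ | σ ∈ C.X ∧ σ.card = n + 1 ∧ lev τ₀ + ε ≤ lev σ ∧ slt σ ω₀}

/-- `F_{ε,n-1}`: the `(n-1)`-simplices with level at least `lev τ₀ + ε` that
precede `ω₀`. -/
def Fedges (C : NComplex V n) (lev : Finset V → ℝ)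
    (slt : Finset V → Finset V → Prop) (τ₀ ω₀ : Finset V) (ε : ℝ) :
    Set (Finset V) :=
  {σ | σ ∈ C.X ∧ σ.card = n ∧ lev τ₀ + ε ≤ lev σ ∧ slt σ ω₀}

/-- `τ*(∂z)`: the `ℤ/2ℤ`-sum of the coefficients of `z` over the `n`-simplex
cofaces of `τ`. -/
def bsum (C : NComplex V n) (τ : Finset V) (z : Finset V → ZMod 2) : ZMod 2 :=
  ∑ ω ∈ C.X.filter (fun ω => ω.card = n + 1 ∧ τ ⊆ ω), z ω

/-- A feasible chain `z = ω₀ + Σ_{ω ∈ F_{ε,n}} α_ω ω` with `τ*(∂z) = 0` for all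
`τ ∈ F_{ε,n-1}`. -/
def IsFeasible (C : NComplex V n) (lev : Finset V → ℝ)
    (slt : Finset V → Finset V → Prop) (τ₀ ω₀ : Finset V) (ε : ℝ)
    (z : Finset V → ZMod 2) : Prop :=
  z ω₀ = 1 ∧
  (∀ ω : Finset V, ω ≠ ω₀ → ω ∉ Fcells C lev slt τ₀ ω₀ ε → z ω = 0) ∧
  (∀ τ ∈ Fedges C lev slt τ₀ ω₀ ε, bsum C τ z = 0)

/-- `‖z‖₀`: the number of simplices of `X` with nonzero coefficient in `z`. -/
def norm0 (C : NComplex V n) (z : Finset V → ZMod 2) : ℕ :=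
  (C.X.filter fun ω => z ω ≠ 0).card

/-- The level function of the perturbed order `q(r, η, A)`. -/
noncomputable def pertLev (C : NComplex V n) (rlev : Finset V → ℝ) (η : ℝ)
    (A : Set (Finset V)) : Finset V → ℝ :=
  fun σ => if (σ ∈ C.X ∧ σ.card = n + 1) ∨ σ ∈ A then rlev σ + η else rlev σ - η

/-- The strict order of the perturbed order `q(r, η, A)`. -/
def pertSlt (C : NComplex V n) (rlev : Finset V → ℝ)
    (rslt : Finset V → Finset V → Prop) (η : ℝ) (A : Set (Finset V)) :
    Finset V → Finset V → Prop :=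
  fun σ σ' => pertLev C rlev η A σ < pertLev C rlev η A σ' ∨
    (pertLev C rlev η A σ = pertLev C rlev η A σ' ∧ rslt σ σ')

/-- The `(n-1)`-simplices that are edges of the connected component of `c₀` in the
subgraph with edge set `E`. -/
def compEdges (C : NComplex V n) (E : Set (Finset V)) (c₀ : Cell V) :
    Set (Finset V) :=
  {τ | τ ∈ E ∧ ∃ c, faceCell C τ c ∧ c ∈ KV C E c₀}

/-- `IsPath C E c c' vs es`: `vs` is the vertex list and `es` the edge list of a walk
from `c` to `c'` in the subgraph of the dual graph with edge set `E`. -/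
inductive IsPath (C : NComplex V n) (E : Set (Finset V)) :
    Cell V → Cell V → List (Cell V) → List (Finset V) → Prop
  | nil (c : Cell V) : IsPath C E c c [c] []
  | cons {c c' c'' : Cell V} {vs : List (Cell V)} {es : List (Finset V)}
      {τ : Finset V} : τ ∈ E → faceCell C τ c → faceCell C τ c' → c ≠ c' →
      IsPath C E c' c'' vs es → IsPath C E c c'' (c :: vs) (τ :: es)


section Helpers

variable {V : Type*} [DecidableEq V] {n : ℕ}

lemma adj_symm (C : NComplex V n) (E : Set (Finset V)) {c c' : Cell V}
    (h : adj C E c c') : adj C E c' c := by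
  obtain ⟨τ, hτ, h1, h2, hne⟩ := h
  exact ⟨τ, hτ, h2, h1, hne.symm⟩

lemma KV_symm (C : NComplex V n) (E : Set (Finset V)) {a b : Cell V}
    (h : b ∈ KV C E a) : a ∈ KV C E b := by
  induction h with
  | refl => exact Relation.ReflTransGen.refl
  | tail _ hstep ih => exact Relation.ReflTransGen.head (adj_symm C E hstep) ih

lemma KV_trans (C : NComplex V n) (E : Set (Finset V)) {a b c : Cell V}
    (h1 : b ∈ KV C E a) (h2 : c ∈ KV C E b) : c ∈ KV C E a :=
  Relation.ReflTransGen.trans h1 h2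

lemma KV_eq_of_mem (C : NComplex V n) (E : Set (Finset V)) {a b : Cell V}
    (h : b ∈ KV C E a) : KV C E b = KV C E a := by
  ext c
  exact ⟨fun hc => KV_trans C E h hc, fun hc => KV_trans C E (KV_symm C E h) hc⟩

lemma KV_mono (C : NComplex V n) {E E' : Set (Finset V)} (hE : E ⊆ E')
    {a b : Cell V} (h : b ∈ KV C E a) : b ∈ KV C E' a := by
  induction h with
  | refl => exact Relation.ReflTransGen.refl
  | tail _ hstep ih =>
      obtain ⟨τ, hτ, h1, h2, hne⟩ := hstep
      exact Relation.ReflTransGen.tail ih ⟨τ, hE hτ, h1, h2, hne⟩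

lemma faceCell_isCell (C : NComplex V n) {τ : Finset V} {c : Cell V}
    (h : faceCell C τ c) : IsCell C c := by
  cases c with
  | none => trivial
  | some ω => exact ⟨h.1, h.2.1⟩

lemma KV_isCell (C : NComplex V n) (E : Set (Finset V)) {a b : Cell V}
    (ha : IsCell C a) (h : b ∈ KV C E a) : IsCell C b := by
  induction h with
  | refl => exact ha
  | tail _ hstep _ =>
      obtain ⟨τ, _, _, h2, _⟩ := hstep
      exact faceCell_isCell C h2

/-- A maximum of a finite nonempty set with respect to a total transitive relation. -/
lemma exists_extremal {α : Type*} [DecidableEq α] (R : α → α → Prop) :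
    ∀ s : Finset α, s.Nonempty →
      (∀ a ∈ s, ∀ b ∈ s, a ≠ b → R a b ∨ R b a) →
      (∀ a ∈ s, ∀ b ∈ s, ∀ c ∈ s, R a b → R b c → R a c) →
      ∃ m ∈ s, ∀ x ∈ s, x ≠ m → R x m := by
  intro s
  induction s using Finset.induction_on with
  | empty => intro h; simp at h
  | @insert a s' ha ih =>
      intro _ htot htrans
      rcases s'.eq_empty_or_nonempty with he | hne
      · subst he
        exact ⟨a, Finset.mem_insert_self a _, by simp⟩
      · have hsub : ∀ x ∈ s', x ∈ insert a s' := fun x hx => Finset.mem_insert_of_mem hx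
        obtain ⟨m, hm, hmax⟩ := ih hne
          (fun x hx y hy => htot x (hsub x hx) y (hsub y hy))
          (fun x hx y hy z hz => htrans x (hsub x hx) y (hsub y hy) z (hsub z hz))
        have ham : a ≠ m := fun h => ha (h ▸ hm)
        rcases htot a (Finset.mem_insert_self a s') m (hsub m hm) ham with h1 | h1
        · refine ⟨m, hsub m hm, fun x hx hxm => ?_⟩
          rcases Finset.mem_insert.mp hx with rfl | hx'
          · exact h1
          · exact hmax x hx' hxm
        · refine ⟨a, Finset.mem_insert_self a s', fun x hx hxa => ?_⟩
          rcases Finset.mem_insert.mp hx with rfl | hx'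
          · exact absurd rfl hxa
          · by_cases hxm : x = m
            · exact hxm ▸ h1
            · exact htrans x (hsub x hx') m (hsub m hm) a
                (Finset.mem_insert_self a s') (hmax x hx' hxm) h1

/-- Path decomposition: reachability using one extra edge `τ`. -/
lemma merge_lemma (C : NComplex V n) (htwo : TwoCofaces C) (E : Set (Finset V))
    {τ : Finset V} (hτX : τ ∈ C.X) (hτc : τ.card = n) {a b : Cell V}
    (h : b ∈ KV C (insert τ E) a) :
    b ∈ KV C E a ∨ ∃ d d' : Cell V, d ≠ d' ∧ faceCell C τ d ∧ faceCell C τ d' ∧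
      d ∈ KV C E a ∧ b ∈ KV C E d' := by
  obtain ⟨e₁, e₂, he, hiff⟩ := htwo τ hτX hτc
  induction h with
  | refl => exact Or.inl Relation.ReflTransGen.refl
  | @tail b' b _ hstep ih =>
      obtain ⟨τ', hτ', h1, h2, hne⟩ := hstep
      rcases Set.mem_insert_iff.mp hτ' with rfl | hτ'E
      · -- the step uses the new edge τ'
        rcases ih with hb' | ⟨d, d', hdd', hfd, hfd', hda, hb'd'⟩
        · exact Or.inr ⟨b', b, hne, h1, h2, hb', Relation.ReflTransGen.refl⟩
        · -- {d, d'} = {b', b}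
          have pd := (hiff d).mp hfd
          have pd' := (hiff d').mp hfd'
          have pb' := (hiff b').mp h1
          have pb := (hiff b).mp h2
          have hset : (d = b' ∧ d' = b) ∨ (d = b ∧ d' = b') := by
            rcases pd with rfl | rfl <;> rcases pd' with rfl | rfl <;>
              rcases pb' with rfl | rfl <;> rcases pb with rfl | rfl <;>
              first
                | exact absurd rfl hdd'
                | exact absurd rfl hne
                | exact Or.inl ⟨rfl, rfl⟩
                | exact Or.inr ⟨rfl, rfl⟩
          rcases hset with ⟨rfl, rfl⟩ | ⟨rfl, rfl⟩
          · exact Or.inl (KV_trans C E hda (KV_symm C E hb'd'))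
          · exact Or.inl hda
      · rcases ih with hb' | ⟨d, d', hdd', hfd, hfd', hda, hb'd'⟩
        · exact Or.inl (Relation.ReflTransGen.tail hb' ⟨τ', hτ'E, h1, h2, hne⟩)
        · exact Or.inr ⟨d, d', hdd', hfd, hfd',
            hda, Relation.ReflTransGen.tail hb'd' ⟨τ', hτ'E, h1, h2, hne⟩⟩

end Helpers

/-- Claim 3.4: for every `q ∈ R_ε`, the stable volume is contained
in the optimal volume `OV(q, ω₀)`. -/
theorem stable_volume_subset_optimal_volume
    (hn : 2 ≤ n) (C : NComplex V n) (htwo : TwoCofaces C) (hconn : DualConn C)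
    (rlev : Finset V → ℝ) (rslt : Finset V → Finset V → Prop)
    (hr : IsOWL C rlev rslt)
    (τ₀ ω₀ : Finset V) (hpair : IsPersPair C rslt τ₀ ω₀)
    (ε : ℝ) (hε : 0 < ε)
    (qlev : Finset V → ℝ) (qslt : Finset V → Finset V → Prop)
    (hq : InR C rlev rslt ω₀ ε qlev qslt) :
    SV C rlev τ₀ ω₀ ε ⊆ OV C qslt ω₀ := by
  obtain ⟨hrlev, hrirr, hrtrans, hrtot, hrmono, hrsub⟩ := hr
  obtain ⟨⟨hqlev, hqirr, hqtrans, hqtot, hqmono, hqsub⟩, hclose, hord⟩ := hq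
  obtain ⟨hτ₀X, hτ₀c, hω₀X, hω₀c, c₁r, c₂r, hner, hf1r, hf2r, hncr,
    m₂r, hmax1r, hmax2r, hltr⟩ := hpair
  have hωcell : IsCell C (some ω₀) := ⟨hω₀X, hω₀c⟩
  -- Step A: `ω₀` is the `q`-max of its component in `G(⪰_q τ̄)` for every high edge `τ̄`.
  have hAlive : ∀ τb ∈ C.X, τb.card = n → rlev τ₀ + ε ≤ rlev τb →
      IsMaxCell qslt (KV C (Ege C qslt τb) (some ω₀)) (some ω₀) := by
    intro τb hτbX hτbc hτblev
    have hEsub : Ege C qslt τb ⊆ Egt C rslt τ₀ := by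
      rintro τ ⟨hτX, hτc, hor⟩
      have h1 : qlev τb ≤ qlev τ := by
        rcases hor with rfl | h
        · exact le_rfl
        · exact hqmono τb hτbX τ hτX h
      have h2 := abs_lt.mp (hclose τ hτX)
      have h3 := abs_lt.mp (hclose τb hτbX)
      have h4 : rlev τ₀ < rlev τ := by linarith
      have hne : τ ≠ τ₀ := by rintro rfl; linarith
      refine ⟨hτX, hτc, ?_⟩
      rcases hrtot τ₀ hτ₀X τ hτX (Ne.symm hne) with h | h
      · exact h
      · exact absurd (hrmono τ hτX τ₀ hτ₀X h) (by linarith)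
    have hω₀mem : (some ω₀ : Cell V) ∈ KV C (Egt C rslt τ₀) c₁r := hmax1r.1
    refine ⟨Relation.ReflTransGen.refl, ?_⟩
    intro c hc hne
    have hcr : c ∈ KV C (Egt C rslt τ₀) c₁r :=
      KV_trans C _ hω₀mem (KV_mono C hEsub hc)
    have hcell : IsCell C c := KV_isCell C _ hωcell hc
    have hlt := hmax1r.2 c hcr hne
    cases c with
    | none => exact hlt
    | some σ => exact hord σ hcell.1 hlt
  -- The `(n-1)`-simplices and the dead set `D`.
  set En : Finset (Finset V) := C.X.filter (fun τ => τ.card = n) with hEn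
  set D : Finset (Finset V) := C.X.filter (fun τ => τ.card = n ∧
    ¬ IsMaxCell qslt (KV C (Ege C qslt τ) (some ω₀)) (some ω₀)) with hD
  have hEnne : En.Nonempty := by
    obtain ⟨v, hv⟩ := C.nonempty_mem ω₀ hω₀X
    refine ⟨ω₀.erase v, Finset.mem_filter.mpr ⟨?_, ?_⟩⟩
    · refine C.down_closed ω₀ hω₀X _ (Finset.erase_subset v ω₀) ?_
      rw [← Finset.card_pos, Finset.card_erase_of_mem hv, hω₀c]
      omega
    · rw [Finset.card_erase_of_mem hv, hω₀c]
      omega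
  have hDne : D.Nonempty := by
    obtain ⟨m, hmEn, hmmin⟩ := exists_extremal (fun a b => qslt b a) En hEnne
      (fun a ha b hb hne =>
        (hqtot a (Finset.mem_filter.mp ha).1 b (Finset.mem_filter.mp hb).1 hne).symm)
      (fun a ha b hb c hc h1 h2 => hqtrans c (Finset.mem_filter.mp hc).1
        b (Finset.mem_filter.mp hb).1 a (Finset.mem_filter.mp ha).1 h2 h1)
    have hmX := (Finset.mem_filter.mp hmEn).1
    have hmc := (Finset.mem_filter.mp hmEn).2
    have hEeq : Ege C qslt m = {τ | τ ∈ C.X ∧ τ.card = n} := by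
      ext τ
      constructor
      · rintro ⟨h1, h2, _⟩; exact ⟨h1, h2⟩
      · rintro ⟨h1, h2⟩
        refine ⟨h1, h2, ?_⟩
        by_cases hτm : τ = m
        · exact Or.inl hτm
        · exact Or.inr (hmmin τ (Finset.mem_filter.mpr ⟨h1, h2⟩) hτm)
    have hinf : (none : Cell V) ∈ KV C (Ege C qslt m) (some ω₀) := by
      rw [hEeq]; exact hconn (some ω₀) none hωcell trivial
    refine ⟨m, Finset.mem_filter.mpr ⟨hmX, hmc, ?_⟩⟩
    intro hmax
    exact hmax.2 none hinf (by simp)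
  obtain ⟨τq, hτqD, hτqmax⟩ := exists_extremal qslt D hDne
    (fun a ha b hb hne =>
      hqtot a (Finset.mem_filter.mp ha).1 b (Finset.mem_filter.mp hb).1 hne)
    (fun a ha b hb c hc => hqtrans a (Finset.mem_filter.mp ha).1
      b (Finset.mem_filter.mp hb).1 c (Finset.mem_filter.mp hc).1)
  obtain ⟨hτqX, hτqc, hτqdead⟩ := Finset.mem_filter.mp hτqD
  -- Step D: alive edges lie strictly above `τq`.
  have hgt : ∀ τ ∈ C.X, τ.card = n →
      IsMaxCell qslt (KV C (Ege C qslt τ) (some ω₀)) (some ω₀) → qslt τq τ := by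
    intro τ hτX hτc halive
    have hτnq : τ ≠ τq := by rintro rfl; exact hτqdead halive
    rcases hqtot τq hτqX τ hτX (Ne.symm hτnq) with h | h
    · exact h
    · exfalso
      apply hτqdead
      have hsub : Ege C qslt τq ⊆ Ege C qslt τ := by
        rintro τ' ⟨h1, h2, h3⟩
        refine ⟨h1, h2, Or.inr ?_⟩
        rcases h3 with rfl | h3
        · exact h
        · exact hqtrans τ hτX τq hτqX τ' h1 h h3
      exact ⟨Relation.ReflTransGen.refl, fun c hc hne =>
        halive.2 c (KV_mono C hsub hc) hne⟩
  -- Step E: `ω₀` is the `q`-max of its component in `G(≻_q τq)`.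
  have hmaxEgt : IsMaxCell qslt (KV C (Egt C qslt τq) (some ω₀)) (some ω₀) := by
    set S' : Finset (Finset V) := En.filter (fun τ => qslt τq τ) with hS'
    rcases S'.eq_empty_or_nonempty with hS'e | hS'ne
    · have hsingle : ∀ x : Cell V, x ∈ KV C (Egt C qslt τq) (some ω₀) →
          x = some ω₀ := by
        intro x hx
        induction hx with
        | refl => rfl
        | tail _ hstep ih =>
            exfalso
            obtain ⟨τ', hτ'mem, -, -, -⟩ := hstep
            have hS'm : τ' ∈ S' := Finset.mem_filter.mpr
              ⟨Finset.mem_filter.mpr ⟨hτ'mem.1, hτ'mem.2.1⟩, hτ'mem.2.2⟩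
            rw [hS'e] at hS'm
            exact Finset.notMem_empty _ hS'm
      exact ⟨Relation.ReflTransGen.refl,
        fun c hc hne => absurd (hsingle c hc) hne⟩
    · obtain ⟨τ', hτ'S, hτ'min⟩ := exists_extremal (fun a b => qslt b a) S' hS'ne
        (fun a ha b hb hne =>
          (hqtot a (Finset.mem_filter.mp (Finset.mem_filter.mp ha).1).1
            b (Finset.mem_filter.mp (Finset.mem_filter.mp hb).1).1 hne).symm)
        (fun a ha b hb c hc h1 h2 =>
          hqtrans c (Finset.mem_filter.mp (Finset.mem_filter.mp hc).1).1
            b (Finset.mem_filter.mp (Finset.mem_filter.mp hb).1).1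
            a (Finset.mem_filter.mp (Finset.mem_filter.mp ha).1).1 h2 h1)
      have hτ'X : τ' ∈ C.X :=
        (Finset.mem_filter.mp (Finset.mem_filter.mp hτ'S).1).1
      have hτ'c : τ'.card = n :=
        (Finset.mem_filter.mp (Finset.mem_filter.mp hτ'S).1).2
      have hτ'gt : qslt τq τ' := (Finset.mem_filter.mp hτ'S).2
      have hEeq : Egt C qslt τq = Ege C qslt τ' := by
        ext τ
        constructor
        · rintro ⟨h1, h2, h3⟩
          refine ⟨h1, h2, ?_⟩
          by_cases hττ' : τ = τ'
          · exact Or.inl hττ'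
          · exact Or.inr (hτ'min τ (Finset.mem_filter.mpr
              ⟨Finset.mem_filter.mpr ⟨h1, h2⟩, h3⟩) hττ')
        · rintro ⟨h1, h2, h3⟩
          refine ⟨h1, h2, ?_⟩
          rcases h3 with rfl | h3
          · exact hτ'gt
          · exact hqtrans τq hτqX τ' hτ'X τ h1 hτ'gt h3
      rw [hEeq]
      by_contra hdead
      have hτ'D : τ' ∈ D := Finset.mem_filter.mpr ⟨hτ'X, hτ'c, hdead⟩
      have hττq : τ' ≠ τq := fun h => hqirr τq hτqX (h ▸ hτ'gt)
      exact hqirr τq hτqX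
        (hqtrans τq hτqX τ' hτ'X τq hτqX hτ'gt (hτqmax τ' hτ'D hττq))
  -- Step F: extract the merging witness and build the `q`-persistence pair.
  have hEge_ins : Ege C qslt τq = insert τq (Egt C qslt τq) := by
    ext τ
    simp only [Set.mem_insert_iff]
    constructor
    · rintro ⟨h1, h2, rfl | h3⟩
      · exact Or.inl rfl
      · exact Or.inr ⟨h1, h2, h3⟩
    · rintro (rfl | ⟨h1, h2, h3⟩)
      · exact ⟨hτqX, hτqc, Or.inl rfl⟩
      · exact ⟨h1, h2, Or.inr h3⟩
  obtain ⟨c, hcKV, hcne, hcnlt⟩ : ∃ c ∈ KV C (Ege C qslt τq) (some ω₀),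
      c ≠ some ω₀ ∧ ¬ cslt qslt c (some ω₀) := by
    by_contra hcon
    push_neg at hcon
    exact hτqdead ⟨Relation.ReflTransGen.refl,
      fun c hc hne => hcon c hc hne⟩
  have hcnot : c ∉ KV C (Egt C qslt τq) (some ω₀) := by
    intro h
    exact hcnlt (hmaxEgt.2 c h hcne)
  obtain ⟨d, d', hdd', hfd, hfd', hdKV, hcd'⟩ :=
    (merge_lemma C htwo (Egt C qslt τq) hτqX hτqc
      (hEge_ins ▸ hcKV)).resolve_left hcnot
  have hd'not : d' ∉ KV C (Egt C qslt τq) d := by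
    intro h
    exact hcnot (KV_trans C _ hdKV (KV_trans C _ h hcd'))
  have hKVd : KV C (Egt C qslt τq) d = KV C (Egt C qslt τq) (some ω₀) :=
    KV_eq_of_mem C _ hdKV
  have hd'cell : IsCell C d' := faceCell_isCell C hfd'
  set F : Finset (Cell V) := insert none (C.X.image some) with hF
  have hmemF : ∀ x : Cell V, IsCell C x → x ∈ F := by
    intro x hx
    cases x with
    | none => exact Finset.mem_insert_self _ _
    | some ω => exact Finset.mem_insert_of_mem (Finset.mem_image_of_mem some hx.1)
  have hFX : ∀ x : Cell V, x ∈ F → x = none ∨ ∃ ω ∈ C.X, x = some ω := by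
    intro x hx
    rcases Finset.mem_insert.mp hx with rfl | hx
    · exact Or.inl rfl
    · obtain ⟨ω, hω, rfl⟩ := Finset.mem_image.mp hx
      exact Or.inr ⟨ω, hω, rfl⟩
  set Fc : Finset (Cell V) := F.filter (fun x => x ∈ KV C (Egt C qslt τq) d')
    with hFc
  have hFcne : Fc.Nonempty :=
    ⟨d', Finset.mem_filter.mpr ⟨hmemF d' hd'cell, Relation.ReflTransGen.refl⟩⟩
  have htotFc : ∀ a ∈ Fc, ∀ b ∈ Fc, a ≠ b → cslt qslt a b ∨ cslt qslt b a := by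
    intro a ha b hb hne
    rcases hFX a (Finset.mem_filter.mp ha).1 with rfl | ⟨ω, hω, rfl⟩
    · rcases hFX b (Finset.mem_filter.mp hb).1 with rfl | ⟨ω', hω', rfl⟩
      · exact absurd rfl hne
      · exact Or.inr trivial
    · rcases hFX b (Finset.mem_filter.mp hb).1 with rfl | ⟨ω', hω', rfl⟩
      · exact Or.inl trivial
      · exact hqtot ω hω ω' hω' (fun h => hne (congrArg some h))
  have htransFc : ∀ a ∈ Fc, ∀ b ∈ Fc, ∀ c' ∈ Fc,
      cslt qslt a b → cslt qslt b c' → cslt qslt a c' := by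
    intro a ha b hb c' hc' h1 h2
    rcases hFX a (Finset.mem_filter.mp ha).1 with rfl | ⟨ω, hω, rfl⟩
    · exact absurd h1 (fun h => h)
    · rcases hFX c' (Finset.mem_filter.mp hc').1 with rfl | ⟨ω'', hω'', rfl⟩
      · trivial
      · rcases hFX b (Finset.mem_filter.mp hb).1 with rfl | ⟨ω', hω', rfl⟩
        · exact absurd h2 (fun h => h)
        · exact hqtrans ω hω ω' hω' ω'' hω'' h1 h2
  obtain ⟨m₂, hm₂Fc, hm₂max⟩ := exists_extremal (cslt qslt) Fc hFcne htotFc htransFc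
  have hm₂KV : m₂ ∈ KV C (Egt C qslt τq) d' := (Finset.mem_filter.mp hm₂Fc).2
  have hmax2 : IsMaxCell qslt (KV C (Egt C qslt τq) d') m₂ := by
    refine ⟨hm₂KV, fun x hx hne => ?_⟩
    exact hm₂max x (Finset.mem_filter.mpr
      ⟨hmemF x (KV_isCell C _ hd'cell hx), hx⟩) hne
  have hccell : IsCell C c := KV_isCell C _ hωcell hcKV
  have hω₀m₂ : cslt qslt (some ω₀) m₂ := by
    cases m₂ with
    | none => trivial
    | some μ =>
      have hμX : μ ∈ C.X := (KV_isCell C _ hd'cell hm₂KV).1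
      obtain ⟨γ, hγ⟩ : ∃ γ, c = some γ := by
        cases c with
        | none =>
          by_cases hcm : (none : Cell V) = some μ
          · exact absurd hcm (by simp)
          · exact absurd (hmax2.2 none hcd' hcm) (fun h => h)
        | some γ => exact ⟨γ, rfl⟩
      subst hγ
      have hγX : γ ∈ C.X := hccell.1
      have hγω : γ ≠ ω₀ := fun h => hcne (congrArg some h)
      have hqωγ : qslt ω₀ γ := by
        rcases hqtot ω₀ hω₀X γ hγX hγω.symm with h | h
        · exact h
        · exact absurd h hcnlt
      by_cases hγμ : γ = μ
      · exact hγμ ▸ hqωγ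
      · have hγμ' : qslt γ μ :=
          hmax2.2 (some γ) hcd' (fun h => hγμ (Option.some_injective _ h))
        exact hqtrans ω₀ hω₀X γ hγX μ hμX hqωγ hγμ'
  have hpp : IsPersPair C qslt τq ω₀ :=
    ⟨hτqX, hτqc, hω₀X, hω₀c, d, d', hdd', hfd, hfd', hd'not, m₂,
      hKVd.symm ▸ hmaxEgt, hmax2, hω₀m₂⟩
  -- Step G: conclude.
  intro x hx
  refine ⟨τq, hpp, ?_⟩
  refine KV_mono C ?_ hx
  rintro τ ⟨h1, h2, h3⟩
  exact ⟨h1, h2, hgt τ h1 h2 (hAlive τ h1 h2 h3)⟩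


end StableVol
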